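/- arXiv:2111.08530 — 2 statements merged into one kernel-verified Lean document; each statement's English description precedes it below -/
import Mathlib

section
/- Fundamental identity with partial Fourier transform in dimension 1 generalized: for f, g Schwartz on ℝ^d and the full Fourier transform ℱ, V_g f(x, ξ) = e^{−2πi x·ξ} V_{ℱg}(ℱf)(ξ, −x) for all x, ξ ∈ ℝ^d. -/
open MeasureTheory FourierTransform Real

/-- Short-time Fourier transform on `ℝ^d` (Euclidean inner product pairing). -/
noncomputable def stftE (d : ℕ) (g f : EuclideanSpace ℝ (Fin d) → ℂ)
    (x ξ : EuclideanSpace ℝ (Fin d)) : ℂ :=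
  ∫ t : EuclideanSpace ℝ (Fin d),
    f t * (starRingEnd ℂ) (g (t - x)) *
      Complex.exp (-2 * (Real.pi : ℂ) * Complex.I * ((inner ℝ t ξ : ℝ) : ℂ))

/-- The fundamental identity of time-frequency analysis:
`V_g f(x, ξ) = e^{−2πi x·ξ} V_{ĝ} f̂ (ξ, −x)`. -/
theorem stmt12 (d : ℕ) (f g : SchwartzMap (EuclideanSpace ℝ (Fin d)) ℂ)
    (x ξ : EuclideanSpace ℝ (Fin d)) :
    stftE d g f x ξ
      = Complex.exp (-2 * (Real.pi : ℂ) * Complex.I * ((inner ℝ x ξ : ℝ) : ℂ)) *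
          stftE d (𝓕 (g : EuclideanSpace ℝ (Fin d) → ℂ))
            (𝓕 (f : EuclideanSpace ℝ (Fin d) → ℂ)) ξ (-x) := by
  set G : SchwartzMap (EuclideanSpace ℝ (Fin d)) ℂ := SchwartzMap.fourierTransformCLM ℂ g with hGdef
  have hG : ⇑G = 𝓕 (g : EuclideanSpace ℝ (Fin d) → ℂ) := rfl
  set ψ : EuclideanSpace ℝ (Fin d) → ℂ := fun ω =>
    Complex.exp (2 * (Real.pi : ℂ) * Complex.I * ((inner ℝ ω x : ℝ) : ℂ)) *
      (starRingEnd ℂ) (G (ω - ξ)) with hψdef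
  -- integrability of ψ
  have hint : Integrable (fun ω : EuclideanSpace ℝ (Fin d) => (starRingEnd ℂ) (G (ω - ξ))) := by
    have h1 : Integrable (fun ω : EuclideanSpace ℝ (Fin d) => G (ω - ξ)) :=
      G.integrable.comp_sub_right ξ
    refine h1.norm.mono' (Continuous.aestronglyMeasurable ?_) (Filter.Eventually.of_forall fun ω => ?_)
    · exact Complex.continuous_conj.comp (G.continuous.comp (continuous_id.sub continuous_const))
    · simp
  have hψint : Integrable ψ := by
    refine hint.bdd_mul (c := 1) ?_ (Filter.Eventually.of_forall fun ω => ?_)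
    · refine (Complex.continuous_exp.comp ?_).aestronglyMeasurable
      exact continuous_const.mul (Complex.continuous_ofReal.comp (continuous_id.inner continuous_const))
    · rw [show (2 * (Real.pi : ℂ) * Complex.I * ((inner ℝ ω x : ℝ) : ℂ))
          = ((2 * Real.pi * (inner ℝ ω x : ℝ) : ℝ) : ℂ) * Complex.I by push_cast; ring]
      exact le_of_eq (Complex.norm_exp_ofReal_mul_I _)
  -- multiplication formula
  have hflip : (innerₗ (EuclideanSpace ℝ (Fin d))).flip = innerₗ (EuclideanSpace ℝ (Fin d)) := by
    ext v w; exact real_inner_comm v w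
  have key : (∫ ω, (𝓕 (f : EuclideanSpace ℝ (Fin d) → ℂ)) ω • ψ ω)
      = ∫ t, (f : EuclideanSpace ℝ (Fin d) → ℂ) t • (𝓕 ψ) t := by
    have := VectorFourier.integral_fourierIntegral_smul_eq_flip (L := innerₗ (EuclideanSpace ℝ (Fin d)))
      (μ := volume) (ν := volume) Real.continuous_fourierChar continuous_inner f.integrable hψint
    rwa [hflip] at this
  -- compute 𝓕 ψ
  have hFψ : ∀ t : EuclideanSpace ℝ (Fin d), (𝓕 ψ) t
      = Complex.exp (-2 * (Real.pi : ℂ) * Complex.I * ((inner ℝ ξ (t - x) : ℝ) : ℂ)) *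
        (starRingEnd ℂ) (g (t - x)) := by
    intro t
    have hinv : 𝓕⁻ (𝓕 (g : EuclideanSpace ℝ (Fin d) → ℂ)) = (g : EuclideanSpace ℝ (Fin d) → ℂ) :=
      g.continuous.fourierInv_fourier_eq g.integrable (hG ▸ G.integrable)
    calc (𝓕 ψ) t
        = ∫ ω : EuclideanSpace ℝ (Fin d),
            Complex.exp (((-2 * π * (inner ℝ ω t : ℝ) : ℝ) : ℂ) * Complex.I) • ψ ω :=
          Real.fourier_eq' ψ t
      _ = ∫ ω : EuclideanSpace ℝ (Fin d),
            Complex.exp (((-2 * π * (inner ℝ (ω + ξ) t : ℝ) : ℝ) : ℂ) * Complex.I) • ψ (ω + ξ) :=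
          (integral_add_right_eq_self (fun ω : EuclideanSpace ℝ (Fin d) =>
            Complex.exp (((-2 * π * (inner ℝ ω t : ℝ) : ℝ) : ℂ) * Complex.I) • ψ ω) ξ).symm
      _ = ∫ ω : EuclideanSpace ℝ (Fin d),
            Complex.exp (-2 * (Real.pi : ℂ) * Complex.I * ((inner ℝ ξ (t - x) : ℝ) : ℂ)) *
            (starRingEnd ℂ) (Complex.exp (((2 * π * (inner ℝ ω (t - x) : ℝ) : ℝ) : ℂ) * Complex.I) * G ω) := by
          congr 1; ext ω
          rw [smul_eq_mul]
          simp only [hψdef, add_sub_cancel_right]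
          rw [map_mul, ← Complex.exp_conj, map_mul, Complex.conj_ofReal, Complex.conj_I]
          rw [← mul_assoc, ← mul_assoc, ← Complex.exp_add, ← Complex.exp_add]
          congr 2
          push_cast [inner_add_left, inner_sub_right]
          ring
      _ = Complex.exp (-2 * (Real.pi : ℂ) * Complex.I * ((inner ℝ ξ (t - x) : ℝ) : ℂ)) *
            (starRingEnd ℂ) (∫ ω : EuclideanSpace ℝ (Fin d),
              Complex.exp (((2 * π * (inner ℝ ω (t - x) : ℝ) : ℝ) : ℂ) * Complex.I) * G ω) := by
          rw [integral_const_mul, integral_conj]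
      _ = Complex.exp (-2 * (Real.pi : ℂ) * Complex.I * ((inner ℝ ξ (t - x) : ℝ) : ℂ)) *
            (starRingEnd ℂ) (g (t - x)) := by
          congr 1
          have h2 : (∫ ω : EuclideanSpace ℝ (Fin d),
              Complex.exp (((2 * π * (inner ℝ ω (t - x) : ℝ) : ℝ) : ℂ) * Complex.I) * G ω)
              = 𝓕⁻ (⇑G) (t - x) := by
            rw [Real.fourierInv_eq']; simp [smul_eq_mul]
          rw [h2, hG, hinv]
  -- assemble
  rw [show stftE d (𝓕 (g : EuclideanSpace ℝ (Fin d) → ℂ)) (𝓕 (f : EuclideanSpace ℝ (Fin d) → ℂ)) ξ (-x)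
      = ∫ ω, (𝓕 (f : EuclideanSpace ℝ (Fin d) → ℂ)) ω • ψ ω by
    unfold stftE
    congr 1; ext ω
    rw [smul_eq_mul]
    simp only [hψdef, ← hG]
    have h3 : Complex.exp (-2 * (Real.pi : ℂ) * Complex.I * ((inner ℝ ω (-x) : ℝ) : ℂ))
        = Complex.exp (2 * (Real.pi : ℂ) * Complex.I * ((inner ℝ ω x : ℝ) : ℂ)) := by
      congr 1; push_cast [inner_neg_right]; ring
    rw [h3]; ring]
  rw [key]
  unfold stftE
  rw [← integral_const_mul]
  congr 1; ext t
  rw [smul_eq_mul, hFψ t]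
  rw [show Complex.exp (-2 * (Real.pi : ℂ) * Complex.I * ((inner ℝ x ξ : ℝ) : ℂ)) *
        ((f : EuclideanSpace ℝ (Fin d) → ℂ) t *
          (Complex.exp (-2 * (Real.pi : ℂ) * Complex.I * ((inner ℝ ξ (t - x) : ℝ) : ℂ)) *
          (starRingEnd ℂ) (g (t - x))))
      = (f : EuclideanSpace ℝ (Fin d) → ℂ) t * (starRingEnd ℂ) (g (t - x)) *
          (Complex.exp (-2 * (Real.pi : ℂ) * Complex.I * ((inner ℝ x ξ : ℝ) : ℂ)) *
           Complex.exp (-2 * (Real.pi : ℂ) * Complex.I * ((inner ℝ ξ (t - x) : ℝ) : ℂ))) by ring]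
  rw [← Complex.exp_add]
  congr 2
  push_cast [inner_sub_right, real_inner_comm ξ t, real_inner_comm ξ x]
  ring
end

section
/- Optimality of the integrability condition: let Φ : ℝ^n → [0,∞), let A(y) ∈ GL(d,ℝ) with singular values λ_j(y), and let f, g be nonnegative Schwartz functions with f, g ≥ χ_{B(0,√d)}. If ∫_{ℝ^d} ∫_{ℝ^n} Φ(y) f(A(y)x) g(x) dy dx < ∞, then ∫_{ℝ^n} Φ(y) ∏_{j=1}^d min{1, λ_j(y)^{−1}} dy < ∞. -/
open MeasureTheory Matrix

/-- `lam` lists the singular values of `A`: there is a singular value decomposition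
`A = P · diag(lam) · Q` with `P, Q` orthogonal. -/
def IsSVD {d : ℕ} (A : Matrix (Fin d) (Fin d) ℝ) (lam : Fin d → ℝ) : Prop :=
  ∃ P Q : Matrix (Fin d) (Fin d) ℝ, Pᵀ * P = 1 ∧ Qᵀ * Q = 1 ∧ A = P * Matrix.diagonal lam * Q

/-! Since `f, g ≥ 1` on `B = B(0, √d)`, the integrand dominates `Φ(y) χ_B(A(y)x) χ_B(x)`, which is
jointly measurable, so Tonelli applies. For fixed `y` the inner integral is `Φ(y) |A(y)⁻¹B ∩ B|`.
Writing `A = PΛQ`, the set `A⁻¹B ∩ B` contains `Q⁻¹` of the box `∏ⱼ [0, min {1, λⱼ⁻¹}]`: both `Q`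
and `ΛQ` map that box into the unit cube `[0,1]^d ⊆ B`, and `P`, `Q` preserve `B` and volume. -/

def sqrtDimBall (d : ℕ) : Set (Fin d → ℝ) := {x | √(∑ j, x j ^ 2) ≤ √d}

lemma measurableSet_sqrtDimBall (d : ℕ) : MeasurableSet (sqrtDimBall d) :=
  measurableSet_le (by fun_prop) measurable_const

lemma Icc_zero_one_subset_sqrtDimBall (d : ℕ) : Set.Icc (0 : Fin d → ℝ) 1 ⊆ sqrtDimBall d := by
  intro x ⟨hx0, hx1⟩
  refine Real.sqrt_le_sqrt ?_
  calc ∑ j, x j ^ 2 ≤ ∑ _j : Fin d, (1 : ℝ) :=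
        Finset.sum_le_sum fun j _ => pow_le_one₀ (hx0 j) (hx1 j)
    _ = d := by simp

section Orthogonal

variable {d : ℕ} {M : Matrix (Fin d) (Fin d) ℝ}

lemma sum_sq_mulVec_of_transpose_mul_self (hM : Mᵀ * M = 1) (v : Fin d → ℝ) :
    ∑ j, (M *ᵥ v) j ^ 2 = ∑ j, v j ^ 2 := by
  simp only [sq]
  change (M *ᵥ v) ⬝ᵥ (M *ᵥ v) = v ⬝ᵥ v
  rw [dotProduct_mulVec, ← mulVec_transpose, mulVec_mulVec, hM, one_mulVec]

lemma mulVec_mem_sqrtDimBall_iff (hM : Mᵀ * M = 1) (v : Fin d → ℝ) :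
    M *ᵥ v ∈ sqrtDimBall d ↔ v ∈ sqrtDimBall d := by
  simp only [sqrtDimBall, Set.mem_ofPred_eq, sum_sq_mulVec_of_transpose_mul_self hM]

lemma abs_det_of_transpose_mul_self (hM : Mᵀ * M = 1) : |M.det| = 1 := by
  have h := congrArg det hM
  rw [det_mul, det_transpose, det_one] at h
  rcases mul_self_eq_one_iff.mp h with h1 | h1 <;> simp [h1]

lemma volume_preimage_mulVec_of_transpose_mul_self (hM : Mᵀ * M = 1) (s : Set (Fin d → ℝ)) :
    volume ((M *ᵥ ·) ⁻¹' s) = volume s := by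
  have hdet := abs_det_of_transpose_mul_self hM
  have hdet0 : LinearMap.det (toLin' M) ≠ 0 := by
    rw [LinearMap.det_toLin']; intro h; simp [h] at hdet
  have hlin : (M *ᵥ ·) = toLin' M := funext fun x => (toLin'_apply M x).symm
  rw [hlin, Measure.addHaar_preimage_linearMap volume hdet0, LinearMap.det_toLin', abs_inv, hdet,
    inv_one, ENNReal.ofReal_one, one_mul]

end Orthogonal

theorem ofReal_prod_min_one_inv_le_volume {d : ℕ} {A : Matrix (Fin d) (Fin d) ℝ}
    {lam : Fin d → ℝ} (hlam : ∀ j, 0 < lam j) (hA : IsSVD A lam) :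
    ENNReal.ofReal (∏ j, min 1 (lam j)⁻¹) ≤
      volume ((A *ᵥ ·) ⁻¹' sqrtDimBall d ∩ sqrtDimBall d) := by
  obtain ⟨P, Q, hP, hQ, rfl⟩ := hA
  set c : Fin d → ℝ := fun j => min 1 (lam j)⁻¹
  have hc : ∀ j, 0 ≤ c j := fun j => le_min zero_le_one (inv_pos.mpr (hlam j)).le
  have hbox : (Q *ᵥ ·) ⁻¹' Set.Icc 0 c ⊆
      ((P * diagonal lam * Q) *ᵥ ·) ⁻¹' sqrtDimBall d ∩ sqrtDimBall d := by
    intro x ⟨hx0, hxc⟩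
    have hQx : Q *ᵥ x ∈ Set.Icc 0 1 := ⟨hx0, fun j => (hxc j).trans (min_le_left _ _)⟩
    have hΛQx : diagonal lam *ᵥ (Q *ᵥ x) ∈ Set.Icc 0 1 := by
      refine ⟨fun j => ?_, fun j => ?_⟩ <;>
        simp only [mulVec_diagonal, Pi.zero_apply, Pi.one_apply]
      · exact mul_nonneg (hlam j).le (hx0 j)
      · calc lam j * (Q *ᵥ x) j ≤ lam j * (lam j)⁻¹ :=
              mul_le_mul_of_nonneg_left ((hxc j).trans (min_le_right _ _)) (hlam j).le
          _ = 1 := mul_inv_cancel₀ (hlam j).ne'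
    refine ⟨?_, ?_⟩
    · rw [Set.mem_preimage, ← mulVec_mulVec, ← mulVec_mulVec, mulVec_mem_sqrtDimBall_iff hP]
      exact Icc_zero_one_subset_sqrtDimBall d hΛQx
    · rw [← mulVec_mem_sqrtDimBall_iff hQ]
      exact Icc_zero_one_subset_sqrtDimBall d hQx
  calc ENNReal.ofReal (∏ j, c j) = volume (Set.Icc 0 c) := by
        rw [Real.volume_Icc_pi, ENNReal.ofReal_prod_of_nonneg fun j _ => hc j]
        simp
    _ = volume ((Q *ᵥ ·) ⁻¹' Set.Icc 0 c) :=
        (volume_preimage_mulVec_of_transpose_mul_self hQ _).symm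
    _ ≤ _ := measure_mono hbox

theorem ofReal_mul_prod_min_one_inv_le_lintegral_indicator {d : ℕ}
    {A : Matrix (Fin d) (Fin d) ℝ} {lam : Fin d → ℝ} (hlam : ∀ j, 0 < lam j) (hA : IsSVD A lam)
    (a : ℝ) :
    ENNReal.ofReal (a * ∏ j, min 1 (lam j)⁻¹) ≤
      ∫⁻ x, ((A *ᵥ ·) ⁻¹' sqrtDimBall d ∩ sqrtDimBall d).indicator
        (fun _ => ENNReal.ofReal a) x := by
  have hprod : 0 ≤ ∏ j, min 1 (lam j)⁻¹ :=
    Finset.prod_nonneg fun j _ => le_min zero_le_one (inv_pos.mpr (hlam j)).le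
  have hmeas : Measurable (A *ᵥ ·) := (continuous_const.matrix_mulVec continuous_id).measurable
  rw [ENNReal.ofReal_mul' hprod, lintegral_indicator_const
    ((hmeas (measurableSet_sqrtDimBall d)).inter (measurableSet_sqrtDimBall d))]
  gcongr
  exact ofReal_prod_min_one_inv_le_volume hlam hA

lemma ofReal_le_ofReal_mul_mul_of_one_le {a b c : ℝ} (hb : 1 ≤ b) (hc : 1 ≤ c) :
    ENNReal.ofReal a ≤ ENNReal.ofReal (a * b * c) := by
  rcases le_or_gt a 0 with ha | ha
  · simp [ENNReal.ofReal_of_nonpos ha]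
  · exact ENNReal.ofReal_le_ofReal (by nlinarith [mul_le_mul_of_nonneg_left hb ha.le])

theorem stmt15_general (d n : ℕ) (Φ : (Fin n → ℝ) → ℝ) (hΦmeas : Measurable Φ)
    (A : (Fin n → ℝ) → Matrix (Fin d) (Fin d) ℝ) (hAmeas : Measurable fun y i j => A y i j)
    (lam : (Fin n → ℝ) → Fin d → ℝ)
    (hlpos : ∀ y j, 0 < lam y j) (hSVD : ∀ y, IsSVD (A y) (lam y))
    (f g : (Fin d → ℝ) → ℝ)
    (hf1 : ∀ x : Fin d → ℝ, Real.sqrt (∑ j, (x j) ^ 2) ≤ Real.sqrt d → 1 ≤ f x)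
    (hg1 : ∀ x : Fin d → ℝ, Real.sqrt (∑ j, (x j) ^ 2) ≤ Real.sqrt d → 1 ≤ g x)
    (hfin : (∫⁻ x : Fin d → ℝ, ∫⁻ y : Fin n → ℝ,
        ENNReal.ofReal (Φ y * f ((A y).mulVec x) * g x)) < ⊤) :
    (∫⁻ y : Fin n → ℝ, ENNReal.ofReal (Φ y * ∏ j, min 1 (lam y j)⁻¹)) < ⊤ := by
  set E : Set ((Fin n → ℝ) × (Fin d → ℝ)) :=
    {p | A p.1 *ᵥ p.2 ∈ sqrtDimBall d ∧ p.2 ∈ sqrtDimBall d}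
  have hE : MeasurableSet E := by
    have : Measurable fun p : (Fin n → ℝ) × (Fin d → ℝ) => A p.1 *ᵥ p.2 := by
      unfold mulVec dotProduct; fun_prop
    exact (this (measurableSet_sqrtDimBall d)).inter
      (measurable_snd (measurableSet_sqrtDimBall d))
  have hG : Measurable (E.indicator fun p => ENNReal.ofReal (Φ p.1)) :=
    (hΦmeas.comp measurable_fst).ennreal_ofReal.indicator hE
  refine lt_of_le_of_lt ?_ hfin
  calc ∫⁻ y, ENNReal.ofReal (Φ y * ∏ j, min 1 (lam y j)⁻¹)
      ≤ ∫⁻ y, ∫⁻ x, E.indicator (fun p => ENNReal.ofReal (Φ p.1)) (y, x) :=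
        lintegral_mono fun y => ofReal_mul_prod_min_one_inv_le_lintegral_indicator
          (hlpos y) (hSVD y) (Φ y)
    _ = ∫⁻ x, ∫⁻ y, E.indicator (fun p => ENNReal.ofReal (Φ p.1)) (y, x) :=
        lintegral_lintegral_swap hG.aemeasurable
    _ ≤ _ := lintegral_mono fun x => lintegral_mono fun y =>
        Set.indicator_apply_le'
          (fun hp => ofReal_le_ofReal_mul_mul_of_one_le (hf1 _ hp.1) (hg1 _ hp.2)) fun _ => zero_le

/-- Optimality of the integrability condition: if `f, g ≥ χ_{B(0,√d)}` are nonnegative and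
`∫∫ Φ(y) f(A(y)x) g(x) dy dx < ∞`, then `∫ Φ(y) ∏ⱼ min{1, λⱼ(y)⁻¹} dy < ∞`. -/
theorem stmt15 (d n : ℕ) (Φ : (Fin n → ℝ) → ℝ) (hΦmeas : Measurable Φ) (hΦpos : ∀ y, 0 ≤ Φ y)
    (A : (Fin n → ℝ) → Matrix (Fin d) (Fin d) ℝ) (hAmeas : Measurable fun y i j => A y i j)
    (lam : (Fin n → ℝ) → Fin d → ℝ) (hlmeas : Measurable lam)
    (hlpos : ∀ y j, 0 < lam y j) (hSVD : ∀ y, IsSVD (A y) (lam y))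
    (f g : (Fin d → ℝ) → ℝ) (hfmeas : Measurable f) (hgmeas : Measurable g)
    (hfpos : ∀ x, 0 ≤ f x) (hgpos : ∀ x, 0 ≤ g x)
    (hf1 : ∀ x : Fin d → ℝ, Real.sqrt (∑ j, (x j) ^ 2) ≤ Real.sqrt d → 1 ≤ f x)
    (hg1 : ∀ x : Fin d → ℝ, Real.sqrt (∑ j, (x j) ^ 2) ≤ Real.sqrt d → 1 ≤ g x)
    (hfin : (∫⁻ x : Fin d → ℝ, ∫⁻ y : Fin n → ℝ,
        ENNReal.ofReal (Φ y * f ((A y).mulVec x) * g x)) < ⊤) :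
    (∫⁻ y : Fin n → ℝ, ENNReal.ofReal (Φ y * ∏ j, min 1 (lam y j)⁻¹)) < ⊤ :=
  stmt15_general d n Φ hΦmeas A hAmeas lam hlpos hSVD f g hf1 hg1 hfin
end
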